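/- Let ℰ₀ ⊑ ℰ₁ ⊑ ℰ₂ ⊑ ⋯ be a countable ascending chain of bundle event structures (with respect to the sub-BES order) and let ℰ be its componentwise union (∪ᵢ Eᵢ, ∪ᵢ #ᵢ, ∪ᵢ ↦ᵢ, ∪ᵢ λᵢ, ∪ᵢ Φᵢ). Then L(ℰ) = ∪ᵢ L(ℰᵢ): a triple (x, ≼, λ') is the lposet of a configuration of ℰ if and only if it is the lposet of a configuration of ℰⱼ for some j. -/

import Mathlib

open Classical

namespace PCKA

/-- A bundle event structure over event universe `Ev` and alphabet `A`:
a set of events, a conflict relation, a bundle relation, a partial labelling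
(modelled via `Option`) and a set of final events. -/
structure BES (Ev A : Type) where
  E : Set Ev
  conflict : Ev → Ev → Prop
  bundle : Set Ev → Ev → Prop
  lab : Ev → Option A
  final : Set Ev

variable {Ev A : Type}

/-- Well-formedness of a bundle event structure. -/
def IsBES (ℰ : BES Ev A) : Prop :=
  (∀ e, ¬ ℰ.conflict e e) ∧
  (∀ e e', ℰ.conflict e e' → ℰ.conflict e' e) ∧
  (∀ e e', ℰ.conflict e e' → e ∈ ℰ.E ∧ e' ∈ ℰ.E) ∧
  (∀ x e, ℰ.bundle x e → e ∈ ℰ.E ∧ x ⊆ ℰ.E ∧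
    ∀ a ∈ x, ∀ b ∈ x, a ≠ b → ℰ.conflict a b) ∧
  (∀ e, ℰ.lab e ≠ none → e ∈ ℰ.E) ∧
  ℰ.final ⊆ ℰ.E ∧
  (∀ a ∈ ℰ.final, ∀ b ∈ ℰ.final, a ≠ b → ℰ.conflict a b)

/-- `α` is an event trace of `ℰ`: every event is enabled by each of its bundles
and is distinct from and conflict-free with all earlier events. -/
def IsTrace (ℰ : BES Ev A) (α : List Ev) : Prop :=
  ∀ l e r, α = l ++ e :: r →
    e ∈ ℰ.E ∧
    (∀ x, ℰ.bundle x e → ∃ e' ∈ l, e' ∈ x) ∧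
    (∀ e' ∈ l, e ≠ e' ∧ ¬ ℰ.conflict e e')

/-- A configuration is the set of events of some event trace (a linearisation). -/
def IsConfig (ℰ : BES Ev A) (x : Set Ev) : Prop :=
  ∃ α : List Ev, IsTrace ℰ α ∧ {e | e ∈ α} = x

/-- Adjacent occurrences in a list. -/
def traceAdj (α : List Ev) (a b : Ev) : Prop := ∃ l r, α = l ++ a :: b :: r

/-- The order `≼_α` induced by an event trace: reflexive transitive closure of
adjacency in the trace. -/
def traceOrder (α : List Ev) : Ev → Ev → Prop := Relation.ReflTransGen (traceAdj α)

/-- The causal order `≼_x` of a configuration: the intersection of the orders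
of all its linearisations. -/
def configOrder (ℰ : BES Ev A) (x : Set Ev) (a b : Ev) : Prop :=
  ∀ α, IsTrace ℰ α → {e | e ∈ α} = x → traceOrder α a b

/-- The labelling restricted to a set of events. -/
noncomputable def labOn (ℰ : BES Ev A) (x : Set Ev) : Ev → Option A :=
  fun e => if e ∈ x then ℰ.lab e else none

/-- `(x, o, l)` is the lposet of the configuration `x` of `ℰ`. -/
def IsLposetOf (ℰ : BES Ev A) (x : Set Ev) (o : Ev → Ev → Prop)
    (l : Ev → Option A) : Prop :=
  IsConfig ℰ x ∧
  (∀ a b, o a b ↔ (a ∈ x ∧ b ∈ x ∧ configOrder ℰ x a b)) ∧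
  l = labOn ℰ x

/-- The lposet `(x,ox,lx)` is a prefix of the lposet `(y,oy,ly)`. -/
def LposetPrefix (x : Set Ev) (ox : Ev → Ev → Prop) (lx : Ev → Option A)
    (y : Set Ev) (oy : Ev → Ev → Prop) (ly : Ev → Option A) : Prop :=
  x ⊆ y ∧
  (∀ e ∈ x, ly e = lx e) ∧
  (∀ e e', oy e e' → e' ∈ x → e ∈ x ∧ ox e e')

/-- Restriction of a list to the elements of a set (the subsequence `α|_x`). -/
noncomputable def listRestrict (α : List Ev) (x : Set Ev) : List Ev :=
  α.filter (fun e => decide (e ∈ x))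

/-- The sub-BES order `ℰ ⊑ ℱ`. -/
def SubBES (ℰ ℱ : BES Ev A) : Prop :=
  ℰ.E ⊆ ℱ.E ∧
  (∀ e e', ℰ.conflict e e' ↔ (ℱ.conflict e e' ∧ e ∈ ℰ.E ∧ e' ∈ ℰ.E)) ∧
  (∀ x e, ℰ.bundle x e → ℱ.bundle x e) ∧
  (∀ x e, ℱ.bundle x e → e ∈ ℰ.E → x ⊆ ℰ.E ∧ ℰ.bundle x e) ∧
  (∀ e ∈ ℰ.E, ℰ.lab e = ℱ.lab e) ∧
  (∀ e, e ∈ ℰ.final ↔ (e ∈ ℱ.final ∧ e ∈ ℰ.E))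

/-- `ℰ` is the componentwise union of the chain `c`. -/
def IsChainUnion (c : ℕ → BES Ev A) (ℰ : BES Ev A) : Prop :=
  ℰ.E = (⋃ i, (c i).E) ∧
  (∀ e e', ℰ.conflict e e' ↔ ∃ i, (c i).conflict e e') ∧
  (∀ x e, ℰ.bundle x e ↔ ∃ i, (c i).bundle x e) ∧
  (∀ i, ∀ e ∈ (c i).E, ℰ.lab e = (c i).lab e) ∧
  (∀ e, e ∉ (⋃ i, (c i).E) → ℰ.lab e = none) ∧
  ℰ.final = (⋃ i, (c i).final)

/-- Immediate conflict. -/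
def ImmConflict (ℰ : BES Ev A) (e e' : Ev) : Prop :=
  ℰ.conflict e e' ∧
  ∃ x, IsConfig ℰ x ∧ IsConfig ℰ (x ∪ {e}) ∧ IsConfig ℰ (x ∪ {e'})

/-- A partial cluster: pairwise immediately conflicting, equally pointed events. -/
def PartialCluster (ℰ : BES Ev A) (K : Set Ev) : Prop :=
  K ⊆ ℰ.E ∧
  (∀ e ∈ K, ∀ e' ∈ K, e ≠ e' → ImmConflict ℰ e e') ∧
  (∀ e ∈ K, ∀ e' ∈ K, ∀ x, ℰ.bundle x e → ℰ.bundle x e')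

/-- A cluster is a maximal partial cluster. -/
def Cluster (ℰ : BES Ev A) (K : Set Ev) : Prop :=
  PartialCluster ℰ K ∧ ∀ H, PartialCluster ℰ H → K ⊆ H → H = K

/-- `⟨e⟩`: the intersection of all clusters containing `e`. -/
def cell (ℰ : BES Ev A) (e : Ev) : Set Ev :=
  ⋂₀ {K | Cluster ℰ K ∧ e ∈ K}

/-- `cfl x`: events in conflict with some event of `x`. -/
def cfl (ℰ : BES Ev A) (x : Set Ev) : Set Ev :=
  {e | e ∈ ℰ.E ∧ ∃ e' ∈ x, ℰ.conflict e e'}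

/-- Confusion freeness. -/
def ConfusionFree (ℰ : BES Ev A) : Prop :=
  (∀ e e', ImmConflict ℰ e e' → e ∈ cell ℰ e') ∧
  (∀ x e, IsConfig ℰ x → cell ℰ e ∩ x = ∅ → IsConfig ℰ (x ∪ {e}) →
    ∀ e'' ∈ cell ℰ e, IsConfig ℰ (x ∪ {e''}))

/-- Initial events: those pointed by no bundle. -/
def bInit (ℰ : BES Ev A) : Set Ev :=
  {e | e ∈ ℰ.E ∧ ∀ x, ¬ ℰ.bundle x e}

/-- Nondeterministic choice `ℰ + ℱ` (for disjoint BES). -/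
def bchoice (ℰ ℱ : BES Ev A) : BES Ev A where
  E := ℰ.E ∪ ℱ.E
  conflict := fun e e' => ℰ.conflict e e' ∨ ℱ.conflict e e' ∨
    (e ∈ bInit ℰ ∧ e' ∈ bInit ℱ) ∨ (e ∈ bInit ℱ ∧ e' ∈ bInit ℰ) ∨
    (e ∈ ℰ.final ∧ e' ∈ ℱ.final) ∨ (e ∈ ℱ.final ∧ e' ∈ ℰ.final)
  bundle := fun x e => ℰ.bundle x e ∨ ℱ.bundle x e
  lab := fun e => (ℰ.lab e).orElse (fun _ => ℱ.lab e)
  final := ℰ.final ∪ ℱ.final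

/-- Sequential composition `ℰ · ℱ` (for disjoint BES). -/
def bseq (ℰ ℱ : BES Ev A) : BES Ev A where
  E := ℰ.E ∪ ℱ.E
  conflict := fun e e' => ℰ.conflict e e' ∨ ℱ.conflict e e'
  bundle := fun x e => ℰ.bundle x e ∨ ℱ.bundle x e ∨ (x = ℰ.final ∧ e ∈ bInit ℱ)
  lab := fun e => (ℰ.lab e).orElse (fun _ => ℱ.lab e)
  final := ℱ.final

/-- Concurrent composition `ℰ ‖ ℱ` with fresh delimiter events `d₁, d₂`. -/
def bpar (ℰ ℱ : BES Ev A) (d₁ d₂ : Ev) : BES Ev A where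
  E := ℰ.E ∪ ℱ.E ∪ {d₁, d₂}
  conflict := fun e e' => ℰ.conflict e e' ∨ ℱ.conflict e e'
  bundle := fun x e => ℰ.bundle x e ∨ ℱ.bundle x e ∨
    (x = {d₁} ∧ (e ∈ bInit ℰ ∨ e ∈ bInit ℱ)) ∨
    (x = ℰ.final ∧ e = d₂) ∨ (x = ℱ.final ∧ e = d₂)
  lab := fun e => (ℰ.lab e).orElse (fun _ => ℱ.lab e)
  final := {d₂}

/-- Renaming of a BES along a map of events. -/
noncomputable def brename (g : Ev → Ev) (ℰ : BES Ev A) : BES Ev A where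
  E := g '' ℰ.E
  conflict := fun e e' => ∃ a b, ℰ.conflict a b ∧ e = g a ∧ e' = g b
  bundle := fun x e => ∃ y a, ℰ.bundle y a ∧ x = g '' y ∧ e = g a
  lab := fun e => if h : ∃ a, a ∈ ℰ.E ∧ g a = e then ℰ.lab h.choose else none
  final := g '' ℰ.final

/-- `ℰ'` is a (fresh) copy of `ℰ`. -/
def IsCopy (ℰ' ℰ : BES Ev A) : Prop :=
  ∃ g : Ev → Ev, Set.InjOn g ℰ.E ∧ ℰ' = brename g ℰ

/-- `𝒮` is the binary Kleene product `ℰ * ℱ`: the componentwise union of the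
chain `ℱ ⊑ ℱ + ℰ·ℱ ⊑ ⋯` built with fresh disjoint copies at each stage. -/
def IsStarOf (ℰ ℱ 𝒮 : BES Ev A) : Prop :=
  ∃ c : ℕ → BES Ev A,
    IsCopy (c 0) ℱ ∧
    (∀ i, ∃ ℰ' ℱ' : BES Ev A, IsCopy ℰ' ℰ ∧ IsCopy ℱ' ℱ ∧
      ℱ'.E ∩ (ℰ'.E ∪ (c i).E) = ∅ ∧ ℰ'.E ∩ (c i).E = ∅ ∧
      c (i + 1) = bchoice ℱ' (bseq ℰ' (c i)) ∧
      SubBES (c i) (c (i + 1))) ∧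
    IsChainUnion c 𝒮

/-- The basic BES `0` (deadlock). -/
def besZero : BES Ev A :=
  ⟨∅, fun _ _ => False, fun _ _ => False, fun _ => none, ∅⟩

/-- The basic BES `1` (skip), with a single unlabelled final event. -/
def besOne (e : Ev) : BES Ev A :=
  ⟨{e}, fun _ _ => False, fun _ _ => False, fun _ => none, {e}⟩

/-- The basic BES for a one-step action `a`. -/
noncomputable def besAct (e : Ev) (a : A) : BES Ev A :=
  ⟨{e}, fun _ _ => False, fun _ _ => False,
    fun e' => if e' = e then some a else none, {e}⟩

/-- Regular BES: built from the basic BES by `+`, `·`, `‖` and `*`. -/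
inductive Regular : BES Ev A → Prop
  | zero : Regular besZero
  | one (e : Ev) : Regular (besOne e)
  | act (e : Ev) (a : A) : Regular (besAct e a)
  | choice {ℰ ℱ : BES Ev A} : Regular ℰ → Regular ℱ → ℰ.E ∩ ℱ.E = ∅ →
      Regular (bchoice ℰ ℱ)
  | seq {ℰ ℱ : BES Ev A} : Regular ℰ → Regular ℱ → ℰ.E ∩ ℱ.E = ∅ →
      Regular (bseq ℰ ℱ)
  | par {ℰ ℱ : BES Ev A} (d₁ d₂ : Ev) : Regular ℰ → Regular ℱ →
      ℰ.E ∩ ℱ.E = ∅ → d₁ ≠ d₂ → d₁ ∉ ℰ.E ∪ ℱ.E → d₂ ∉ ℰ.E ∪ ℱ.E →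
      Regular (bpar ℰ ℱ d₁ d₂)
  | star {ℰ ℱ 𝒮 : BES Ev A} : Regular ℰ → Regular ℱ → IsStarOf ℰ ℱ 𝒮 →
      Regular 𝒮

/-- A probability distribution on a BES: a discrete distribution on events
whose support is contained in a single cell `⟨e⟩`. -/
def IsDistOn (ℰ : BES Ev A) (p : PMF Ev) : Prop :=
  ∃ e ∈ ℰ.E, p.support ⊆ cell ℰ e

/-- A probabilistic bundle event structure: a BES with a set of distributions. -/
structure PBES (Ev A : Type) where
  bes : BES Ev A
  dists : Set (PMF Ev)

/-- Well-formedness of a probabilistic BES. -/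
def IsPBES (P : PBES Ev A) : Prop :=
  IsBES P.bes ∧ ConfusionFree P.bes ∧
  (∀ p ∈ P.dists, IsDistOn P.bes p) ∧
  (∀ e ∈ P.bes.E, ∃ p ∈ P.dists, e ∈ p.support)

/-- No bundle set contains a final event. -/
def NoFinalBundle (ℰ : BES Ev A) : Prop :=
  ∀ x e, ℰ.bundle x e → x ∩ ℰ.final = ∅

/-- Probabilistic prefix: `x ⊑ Δ` iff `Δ = Σ_{e ∈ supp p} p e · δ_{x ∪ {e}}`
for some `p` in the distribution set, with `supp p` disjoint from `x` and all
extensions configurations. -/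
def ProbPrefix (P : PBES Ev A) (x : Set Ev) (Δ : PMF (Set Ev)) : Prop :=
  IsConfig P.bes x ∧
  ∃ p ∈ P.dists, p.support ∩ x = ∅ ∧
    (∀ e ∈ p.support, IsConfig P.bes (x ∪ {e})) ∧
    Δ = p.bind (fun e => PMF.pure (x ∪ {e}))

/-- Lifting of a relation `S ⊆ X × 𝒟(Y)` to `𝒟(X) × 𝒟(Y)`. -/
def Lift {X Y : Type} (S : X → PMF Y → Prop) (Δ : PMF X) (Θ : PMF Y) : Prop :=
  ∃ (ι : Type) (_ : Countable ι) (w : PMF ι) (xs : ι → X) (Θs : ι → PMF Y),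
    Δ = w.bind (fun i => PMF.pure (xs i)) ∧
    (∀ i, w i ≠ 0 → S (xs i) (Θs i)) ∧
    Θ = w.bind Θs

/-- The labelled events of a configuration. -/
def hatSet (ℰ : BES Ev A) (x : Set Ev) : Set Ev :=
  {e | e ∈ x ∧ ℰ.lab e ≠ none}

/-- Implementation (subsumption) `x ⊑_s y` between configurations: a
label-preserving monotonic bijection from the labelled events of `y` to those
of `x`. -/
def Subsum (ℰ : BES Ev A) (x : Set Ev) (ℱ : BES Ev A) (y : Set Ev) : Prop :=
  ∃ f : Ev → Ev, Set.BijOn f (hatSet ℱ y) (hatSet ℰ x) ∧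
    (∀ e ∈ hatSet ℱ y, ℰ.lab (f e) = ℱ.lab e) ∧
    (∀ e e', e ∈ hatSet ℱ y → e' ∈ hatSet ℱ y →
      configOrder ℱ y e e' → configOrder ℰ x (f e) (f e'))

/-- Probabilistic simulation from `P` to `Q`. -/
def IsSimulation (P Q : PBES Ev A) (S : Set Ev → PMF (Set Ev) → Prop) : Prop :=
  S ∅ (PMF.pure ∅) ∧
  (∀ x Θ, S x Θ → IsConfig P.bes x ∧
    ∀ y ∈ Θ.support, IsConfig Q.bes y ∧ Subsum P.bes x Q.bes y) ∧
  (∀ x Θ Δ', S x Θ → ProbPrefix P x Δ' →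
    ∃ Θ', Relation.ReflTransGen (Lift (ProbPrefix Q)) Θ Θ' ∧ Lift S Δ' Θ') ∧
  (∀ x Θ, S x Θ → (x ∩ P.bes.final).Nonempty →
    ∀ y ∈ Θ.support, (y ∩ Q.bes.final).Nonempty)

/-- `P ⊑ Q`: there exists a probabilistic simulation from `P` to `Q`. -/
def Sim (P Q : PBES Ev A) : Prop := ∃ S, IsSimulation P Q S

/-- Nondeterministic choice of pBES. -/
def pch (P Q : PBES Ev A) : PBES Ev A :=
  ⟨bchoice P.bes Q.bes, P.dists ∪ Q.dists⟩

/-- Sequential composition of pBES. -/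
def pseq (P Q : PBES Ev A) : PBES Ev A :=
  ⟨bseq P.bes Q.bes, P.dists ∪ Q.dists⟩

/-- Concurrent composition of pBES with fresh delimiters `d₁, d₂`. -/
noncomputable def ppar (P Q : PBES Ev A) (d₁ d₂ : Ev) : PBES Ev A :=
  ⟨bpar P.bes Q.bes d₁ d₂, P.dists ∪ Q.dists ∪ {PMF.pure d₁, PMF.pure d₂}⟩

/-- The sub-pBES order. -/
def SubPBES (P Q : PBES Ev A) : Prop :=
  SubBES P.bes Q.bes ∧ P.dists = {p | p ∈ Q.dists ∧ p.support ⊆ P.bes.E}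

/-- Renaming of a pBES. -/
noncomputable def prename (g : Ev → Ev) (P : PBES Ev A) : PBES Ev A :=
  ⟨brename g P.bes, (fun p => p.map g) '' P.dists⟩

/-- `P'` is a (fresh) copy of the pBES `P`. -/
def IsPCopy (P' P : PBES Ev A) : Prop :=
  ∃ g : Ev → Ev, Set.InjOn g P.bes.E ∧ P' = prename g P

/-- Componentwise union of a chain of pBES. -/
def IsPChainUnion (c : ℕ → PBES Ev A) (P : PBES Ev A) : Prop :=
  IsChainUnion (fun i => (c i).bes) P.bes ∧ P.dists = ⋃ i, (c i).dists

/-- `S` is the binary Kleene product `P * G` of pBES. -/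
def IsPStarOf (P G S : PBES Ev A) : Prop :=
  ∃ c : ℕ → PBES Ev A,
    IsPCopy (c 0) G ∧
    (∀ i, ∃ P' G' : PBES Ev A, IsPCopy P' P ∧ IsPCopy G' G ∧
      G'.bes.E ∩ (P'.bes.E ∪ (c i).bes.E) = ∅ ∧ P'.bes.E ∩ (c i).bes.E = ∅ ∧
      c (i + 1) = pch G' (pseq P' (c i)) ∧
      SubPBES (c i) (c (i + 1))) ∧
    IsPChainUnion c S

/-! A configuration has finitely many events, so it lies in some stage `c j` of the chain.
By the sub-BES conditions, every bundle or conflict of the union that involves events of `c j`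
is already present in `c j`. Hence a set of events of `c j` has the same linearisations, causal
order and labels in `c j` as in the union. -/

theorem SubBES.trans {ℰ ℱ 𝒢 : BES Ev A} (h₁ : SubBES ℰ ℱ) (h₂ : SubBES ℱ 𝒢) :
    SubBES ℰ 𝒢 := by
  obtain ⟨hE₁, hc₁, hb₁, hbd₁, hl₁, hf₁⟩ := h₁
  obtain ⟨hE₂, hc₂, hb₂, hbd₂, hl₂, hf₂⟩ := h₂
  refine ⟨hE₁.trans hE₂, fun e e' => ?_, fun x e h => hb₂ x e (hb₁ x e h),
    fun x e hb he => hbd₁ x e (hbd₂ x e hb (hE₁ he)).2 he,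
    fun e he => (hl₁ e he).trans (hl₂ e (hE₁ he)), fun e => ?_⟩
  · rw [hc₁, hc₂]
    exact ⟨fun ⟨⟨h, _⟩, he, he'⟩ => ⟨h, he, he'⟩,
      fun ⟨h, he, he'⟩ => ⟨⟨h, hE₁ he, hE₁ he'⟩, he, he'⟩⟩
  · rw [hf₁, hf₂]
    exact ⟨fun ⟨⟨h, _⟩, he⟩ => ⟨h, he⟩, fun ⟨h, he⟩ => ⟨⟨h, hE₁ he⟩, he⟩⟩

instance : IsTrans (BES Ev A) SubBES := ⟨fun _ _ _ => SubBES.trans⟩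

theorem IsTrace.mem_E {ℰ : BES Ev A} {α : List Ev} (hα : IsTrace ℰ α) {e : Ev}
    (he : e ∈ α) : e ∈ ℰ.E := by
  obtain ⟨l, r, rfl⟩ := List.append_of_mem he
  exact (hα l e r rfl).1

theorem IsConfig.subset_E {ℰ : BES Ev A} {x : Set Ev} (hx : IsConfig ℰ x) : x ⊆ ℰ.E := by
  obtain ⟨α, hα, rfl⟩ := hx
  exact fun _ => hα.mem_E

structure AgreeOn (ℰ ℱ : BES Ev A) (x : Set Ev) : Prop where
  mem_iff : ∀ e ∈ x, e ∈ ℰ.E ↔ e ∈ ℱ.E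
  bundle_iff : ∀ e ∈ x, ∀ y, ℰ.bundle y e ↔ ℱ.bundle y e
  conflict_iff : ∀ e ∈ x, ∀ e' ∈ x, ℰ.conflict e e' ↔ ℱ.conflict e e'
  lab_eq : ∀ e ∈ x, ℰ.lab e = ℱ.lab e

namespace AgreeOn

variable {ℰ ℱ : BES Ev A} {x : Set Ev}

theorem symm (h : AgreeOn ℰ ℱ x) : AgreeOn ℱ ℰ x :=
  ⟨fun e he => (h.mem_iff e he).symm, fun e he y => (h.bundle_iff e he y).symm,
    fun e he e' he' => (h.conflict_iff e he e' he').symm, fun e he => (h.lab_eq e he).symm⟩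

theorem isTrace {α : List Ev} (h : AgreeOn ℰ ℱ x) (hαx : ∀ e ∈ α, e ∈ x)
    (hα : IsTrace ℰ α) : IsTrace ℱ α := by
  intro l e r hlr
  obtain ⟨hE, hbundle, hfresh⟩ := hα l e r hlr
  have hex : e ∈ x := hαx e (by simp [hlr])
  refine ⟨(h.mem_iff e hex).1 hE, fun y hy => hbundle y ((h.bundle_iff e hex y).2 hy),
    fun e' he' => ?_⟩
  have he'x : e' ∈ x := hαx e' (by simp [hlr, he'])
  exact ⟨(hfresh e' he').1, fun hc => (hfresh e' he').2 ((h.conflict_iff e hex e' he'x).2 hc)⟩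

theorem isTrace_iff {α : List Ev} (h : AgreeOn ℰ ℱ x) (hαx : ∀ e ∈ α, e ∈ x) :
    IsTrace ℰ α ↔ IsTrace ℱ α :=
  ⟨h.isTrace hαx, h.symm.isTrace hαx⟩

theorem isLinearisation_iff {α : List Ev} (h : AgreeOn ℰ ℱ x) :
    IsTrace ℰ α ∧ {e | e ∈ α} = x ↔ IsTrace ℱ α ∧ {e | e ∈ α} = x :=
  and_congr_left fun hαx => h.isTrace_iff fun _ he => hαx ▸ he

theorem isConfig_iff (h : AgreeOn ℰ ℱ x) : IsConfig ℰ x ↔ IsConfig ℱ x :=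
  exists_congr fun _ => h.isLinearisation_iff

theorem configOrder_iff (h : AgreeOn ℰ ℱ x) (a b : Ev) :
    configOrder ℰ x a b ↔ configOrder ℱ x a b :=
  forall_congr' fun _ => by rw [← and_imp, ← and_imp, h.isLinearisation_iff]

theorem labOn_eq (h : AgreeOn ℰ ℱ x) : labOn ℰ x = labOn ℱ x := by
  funext e
  by_cases he : e ∈ x <;> simp [labOn, he, h.lab_eq]

theorem isLposetOf_iff (h : AgreeOn ℰ ℱ x) (o : Ev → Ev → Prop) (l : Ev → Option A) :
    IsLposetOf ℰ x o l ↔ IsLposetOf ℱ x o l := by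
  simp only [IsLposetOf, h.isConfig_iff, h.configOrder_iff, h.labOn_eq]

end AgreeOn

namespace IsChainUnion

variable {c : ℕ → BES Ev A} {𝒮 : BES Ev A}

theorem agreeOn (h𝒮 : IsChainUnion c 𝒮) (hchain : ∀ i, SubBES (c i) (c (i + 1)))
    {j : ℕ} {x : Set Ev} (hx : x ⊆ (c j).E) : AgreeOn (c j) 𝒮 x := by
  have hsub : ∀ ⦃i k⦄, i < k → SubBES (c i) (c k) :=
    Nat.rel_of_forall_rel_succ_of_lt SubBES hchain
  refine ⟨fun e he => ?_, fun e he y => ?_, fun e he e' he' => ?_, fun e he => ?_⟩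
  · rw [h𝒮.1]
    exact iff_of_true (hx he) (Set.mem_iUnion.2 ⟨j, hx he⟩)
  · rw [h𝒮.2.2.1]
    refine ⟨fun hb => ⟨j, hb⟩, fun ⟨i, hb⟩ => ?_⟩
    rcases lt_trichotomy i j with hij | rfl | hji
    · exact (hsub hij).2.2.1 y e hb
    · exact hb
    · exact ((hsub hji).2.2.2.1 y e hb (hx he)).2
  · rw [h𝒮.2.1]
    refine ⟨fun hc => ⟨j, hc⟩, fun ⟨i, hc⟩ => ?_⟩
    rcases lt_trichotomy i j with hij | rfl | hji
    · exact (((hsub hij).2.1 e e').1 hc).1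
    · exact hc
    · exact ((hsub hji).2.1 e e').2 ⟨hc, hx he, hx he'⟩
  · exact (h𝒮.2.2.2.1 j e (hx he)).symm

theorem exists_subset_of_isConfig (h𝒮 : IsChainUnion c 𝒮)
    (hchain : ∀ i, SubBES (c i) (c (i + 1))) {x : Set Ev} (hx : IsConfig 𝒮 x) :
    ∃ j, x ⊆ (c j).E := by
  obtain ⟨α, hα, rfl⟩ := hx
  have hdir : Directed (· ⊆ ·) fun i => (c i).E :=
    (monotone_nat_of_le_succ fun i => (hchain i).1).directed_le
  have hcover : (α.toFinset : Set Ev) ⊆ ⋃ i, (c i).E := by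
    intro e he
    rw [← h𝒮.1]
    exact hα.mem_E (List.mem_toFinset.1 he)
  simpa using hdir.exists_mem_subset_of_finset_subset_biUnion hcover

end IsChainUnion

theorem chainUnion_lposets_general {Ev A : Type} (c : ℕ → BES Ev A)
    (hchain : ∀ i, SubBES (c i) (c (i + 1)))
    (𝒮 : BES Ev A) (h𝒮 : IsChainUnion c 𝒮) :
    ∀ (x : Set Ev) (o : Ev → Ev → Prop) (l : Ev → Option A),
      IsLposetOf 𝒮 x o l ↔ ∃ j, IsLposetOf (c j) x o l := by
  intro x o l
  constructor
  · intro hℓ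
    obtain ⟨j, hx⟩ := h𝒮.exists_subset_of_isConfig hchain hℓ.1
    exact ⟨j, ((h𝒮.agreeOn hchain hx).isLposetOf_iff o l).2 hℓ⟩
  · rintro ⟨j, hℓ⟩
    exact ((h𝒮.agreeOn hchain hℓ.1.subset_E).isLposetOf_iff o l).1 hℓ

/-- Corollary: for an ascending chain of BES with componentwise union `𝒮`,
the lposets of `𝒮` are exactly the lposets arising at some stage of the chain. -/
theorem chainUnion_lposets {Ev A : Type} (c : ℕ → BES Ev A)
    (hwf : ∀ i, IsBES (c i)) (hchain : ∀ i, SubBES (c i) (c (i + 1)))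
    (𝒮 : BES Ev A) (h𝒮 : IsChainUnion c 𝒮) :
    ∀ (x : Set Ev) (o : Ev → Ev → Prop) (l : Ev → Option A),
      IsLposetOf 𝒮 x o l ↔ ∃ j, IsLposetOf (c j) x o l :=
  chainUnion_lposets_general c hchain 𝒮 h𝒮

end PCKA
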